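/- For all natural numbers n ≥ k, the generalized Stirling number of the second kind is the complete homogeneous symmetric function of degree n−k in a(1),…,a(k): S(n,k) = Σ_{d} ∏_{i=1}^{k} a(i)^{d_i}, where the sum runs over all functions d : {1,…,k} → ℕ with d_1 + d_2 + … + d_k = n − k. -/

import Mathlib

/-- Generalized (Comtet/ψ~-) Stirling numbers of the second kind associated with
the sequence `a`. -/
def genStirling {K : Type*} [CommRing K] (a : ℕ → K) : ℕ → ℕ → K
  | 0, 0 => 1
  | 0, _ + 1 => 0
  | _ + 1, 0 => 0
  | n + 1, k + 1 => genStirling a n k + a (k + 1) * genStirling a n (k + 1)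

open Finset Finset.Nat in
lemma genStirling_eq_zero_of_lt {K : Type*} [CommRing K] (a : ℕ → K) :
    ∀ n k, n < k → genStirling a n k = 0
  | 0, _ + 1, _ => rfl
  | n + 1, k + 1, h => by
    rw [genStirling, genStirling_eq_zero_of_lt a n k (by omega),
      genStirling_eq_zero_of_lt a n (k + 1) (by omega)]
    ring

/-- Auxiliary: the complete homogeneous sum. -/
def genH {K : Type*} [CommRing K] (a : ℕ → K) (k m : ℕ) : K :=
  ∑ d ∈ Finset.Nat.antidiagonalTuple k m, ∏ i : Fin k, a (i.val + 1) ^ d i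

lemma genH_zero {K : Type*} [CommRing K] (a : ℕ → K) (k : ℕ) : genH a k 0 = 1 := by
  rw [genH, Finset.Nat.antidiagonalTuple_zero_right]
  simp

open Finset Finset.Nat in
lemma genH_succ_split {K : Type*} [CommRing K] (a : ℕ → K) (k m : ℕ) :
    genH a (k + 1) m = ∑ p ∈ antidiagonal m, genH a k p.1 * a (k + 1) ^ p.2 := by
  simp only [genH, Finset.sum_mul]
  rw [Finset.sum_sigma']
  refine Finset.sum_nbij'
    (i := fun d => (⟨(∑ i : Fin k, d i.castSucc, d (Fin.last k)), Fin.init d⟩ :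
      Σ _p : ℕ × ℕ, Fin k → ℕ))
    (j := fun x => Fin.snoc x.2 x.1.2) ?_ ?_ ?_ ?_ ?_
  · intro d hd
    rw [mem_antidiagonalTuple] at hd
    rw [Finset.mem_sigma, Finset.HasAntidiagonal.mem_antidiagonal, mem_antidiagonalTuple]
    constructor
    · rw [← hd, Fin.sum_univ_castSucc]
    · rfl
  · rintro ⟨⟨p1, p2⟩, x⟩ hx
    rw [Finset.mem_sigma, Finset.HasAntidiagonal.mem_antidiagonal, mem_antidiagonalTuple] at hx
    rw [mem_antidiagonalTuple, Fin.sum_univ_castSucc]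
    simp only [Fin.snoc_castSucc, Fin.snoc_last]
    rw [hx.2, hx.1]
  · intro d _
    exact Fin.snoc_init_self d
  · rintro ⟨⟨p1, p2⟩, x⟩ hx
    rw [Finset.mem_sigma, Finset.HasAntidiagonal.mem_antidiagonal, mem_antidiagonalTuple] at hx
    refine Sigma.ext ?_ ?_
    · simp only [Fin.snoc_castSucc, Fin.snoc_last]
      rw [hx.2]
    · simp [Fin.init_snoc]
  · intro d _
    rw [Fin.prod_univ_castSucc]
    simp [Fin.snoc_castSucc, Fin.snoc_last, Fin.init]

open Finset Finset.Nat in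
lemma genH_rec {K : Type*} [CommRing K] (a : ℕ → K) (k m : ℕ) :
    genH a (k + 1) (m + 1) = genH a k (m + 1) + a (k + 1) * genH a (k + 1) m := by
  rw [genH_succ_split, genH_succ_split, Finset.Nat.antidiagonal_succ']
  rw [Finset.sum_cons]
  rw [Finset.sum_map]
  simp only [Function.Embedding.coe_prodMap, Function.Embedding.coeFn_mk,
    Function.Embedding.refl_apply, Prod.map_fst, Prod.map_snd, pow_zero, mul_one, pow_succ]
  rw [Finset.mul_sum]
  congr 1
  apply Finset.sum_congr rfl
  intro p _
  ring

/-- for `n ≥ k`, `S(n,k)` is the complete homogeneous symmetric function of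
degree `n − k` in `a(1), …, a(k)`:
`S(n,k) = Σ_{d₁+⋯+d_k = n−k} ∏_{i=1}^{k} a(i)^{d_i}`. -/
theorem genStirling_eq_completeHomogeneous {K : Type*} [CommRing K] (a : ℕ → K) (ha : a 0 = 0)
    (n k : ℕ) (hkn : k ≤ n) :
    genStirling a n k =
      ∑ d ∈ Finset.Nat.antidiagonalTuple k (n - k), ∏ i : Fin k, a (i.val + 1) ^ d i := by
  show genStirling a n k = genH a k (n - k)
  induction n generalizing k with
  | zero =>
    interval_cases k
    rw [genH_zero]; rfl
  | succ n ih =>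
    match k, hkn with
    | 0, _ =>
      show (0 : K) = genH a 0 (n + 1)
      rw [genH, Finset.Nat.antidiagonalTuple_zero_succ, Finset.sum_empty]
    | k + 1, hkn =>
      rw [genStirling]
      rcases Nat.lt_or_ge k n with h | h
      · have h1 : k + 1 ≤ n := h
        rw [ih k (by omega), ih (k + 1) h1]
        have e1 : n + 1 - (k + 1) = (n - (k + 1)) + 1 := by omega
        have e2 : n - k = (n - (k + 1)) + 1 := by omega
        rw [e1, e2, genH_rec]
      · have hk : k = n := by omega
        subst hk
        rw [genStirling_eq_zero_of_lt a k (k + 1) (by omega), ih k le_rfl]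
        simp [genH_zero]
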